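/- Let A be a complex unital Banach algebra and M = [[A, B],[C, D]] ∈ M₂(A), with A, D g-Drazin invertible and λ ≠ 0. If AB = λ A^π B D, DC = λ D^π C A, and BC = 0 (hence also the off-diagonal matrix Q = [[0,B],[C,0]] satisfies Q³ = 0 in the relevant sense so Q^d = 0), then M has g-Drazin inverse M^d = diag(A^d, D^d) + Σ_{n≥0} Mⁿ [[0, B (D^d)^{n+2}], [C (A^d)^{n+2}, 0]]. -/

import Mathlib

/-!
Write `M = P + Q` with `P = diag(A, D)` and `Q = [[0, B], [C, 0]]`. Then `BC = 0` makes `Q`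
nilpotent, and the hypotheses on `AB` and `DC` say `PQ = λ Pᵖ Q P`. For the spectral idempotent
`e = P Pᵈ` this forces `eQ = 0`, hence `eMⁿ = Pⁿe` and `PQ = λ QP`. With `f = 1 - e`, the element
`W = Mf = Pf + Qf` is the sum of the quasinilpotent `Pf = P - P²Pᵈ` and the nilpotent `Qf`, which
`λ`-commute, so `W` has spectrum `{0}` and, by Gelfand's formula, `‖Wⁿ‖` decays faster than any
geometric sequence. Since `MⁿQ = WⁿQ`, the series `S = Σ Mⁿ Q (Pᵈ)ⁿ⁺²` converges, and termwise
`Se = S`, `eS = 0` and `MS = SP - QPᵈ`. These relations show that `X = Pᵈ + S` commutes with `M`,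
that `XMX = X`, and that `N = M - M²X` satisfies `N² = WN`, so `N` is quasinilpotent.
-/

def IsQuasinilpotent {R : Type*} [Ring R] (a : R) : Prop :=
  ∀ x : R, Commute a x → IsUnit (1 + a * x)

def IsGDrazinInverse {R : Type*} [Ring R] (a b : R) : Prop :=
  Commute a b ∧ b * a * b = b ∧ IsQuasinilpotent (a - a ^ 2 * b)

open Filter Topology

lemma SemiconjBy.ring_inverse {M₀ : Type*} [MonoidWithZero M₀] {a x y : M₀}
    (h : SemiconjBy a x y) (hx : IsUnit x) (hy : IsUnit y) :
    SemiconjBy a (Ring.inverse x) (Ring.inverse y) := by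
  lift x to M₀ˣ using hx
  lift y to M₀ˣ using hy
  simpa only [Ring.inverse_unit] using h.units_inv_right

section Ring

variable {R : Type*} [Ring R]

lemma IsNilpotent.mul_comm {a b : R} (h : IsNilpotent (b * a)) : IsNilpotent (a * b) := by
  obtain ⟨n, hn⟩ := h
  have key (k : ℕ) : (a * b) ^ (k + 1) = a * (b * a) ^ k * b := by
    induction k with
    | zero => simp
    | succ k ih => rw [_root_.pow_succ, ih, _root_.pow_succ]; simp only [mul_assoc]
  exact ⟨n + 1, by rw [key, hn, mul_zero, zero_mul]⟩

lemma IsNilpotent.mul_left_of_forall_pow_mul {x q : R} (hq : IsNilpotent q)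
    (h : ∀ n : ℕ, ∃ v, q ^ n * x = v * q ^ n) : IsNilpotent (x * q) := by
  have hpow (n : ℕ) : ∃ r, (x * q) ^ n = r * q ^ n := by
    induction n with
    | zero => exact ⟨1, by simp⟩
    | succ n ih =>
      obtain ⟨r, hr⟩ := ih
      obtain ⟨v, hv⟩ := h n
      refine ⟨r * v, ?_⟩
      rw [_root_.pow_succ, hr, mul_assoc, ← mul_assoc (q ^ n), hv, _root_.pow_succ]
      simp only [mul_assoc]
  obtain ⟨m, hm⟩ := hq
  obtain ⟨r, hr⟩ := hpow m
  exact ⟨m, by rw [hr, hm, mul_zero]⟩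

lemma pow_mul_eq_mul_pow_mul {f M : R} (hf : IsIdempotentElem f)
    (hfMf : f * M * f = M * f) (n : ℕ) : M ^ n * f = (M * f) ^ n * f := by
  have hfix (k : ℕ) : f * ((M * f) ^ k * f) = (M * f) ^ k * f := by
    cases k with
    | zero => simp [hf.eq]
    | succ k => simp only [pow_succ', ← mul_assoc, hfMf]
  induction n with
  | zero => simp
  | succ n ih => rw [pow_succ', mul_assoc, ih, ← hfix, ← mul_assoc, ← mul_assoc,
      ← pow_succ']

namespace IsGDrazinInverse

variable {a b : R}

lemma mul_mul_self (h : IsGDrazinInverse a b) : b * (a * b) = b := by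
  rw [← mul_assoc]; exact h.2.1

lemma isIdempotentElem (h : IsGDrazinInverse a b) : IsIdempotentElem (a * b) := by
  rw [IsIdempotentElem, mul_assoc, h.mul_mul_self]

lemma commute_mul (h : IsGDrazinInverse a b) : Commute a (a * b) :=
  (Commute.refl a).mul_right h.1

lemma pow_succ_mul_mul (h : IsGDrazinInverse a b) (n : ℕ) :
    b ^ (n + 1) * (a * b) = b ^ (n + 1) := by
  rw [pow_succ, mul_assoc, h.mul_mul_self]

lemma pow_add_two_mul (h : IsGDrazinInverse a b) (n : ℕ) : b ^ (n + 2) * a = b ^ (n + 1) := by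
  rw [pow_succ, mul_assoc, ← h.1.eq, h.pow_succ_mul_mul]

end IsGDrazinInverse

end Ring

section Algebraic

variable {𝕜 R : Type*} [Field 𝕜] [Ring R] [Algebra 𝕜 R] {P Pd Q : R} {lam : 𝕜}

lemma IsQuasinilpotent.smul {a : R} (h : IsQuasinilpotent a) (c : 𝕜) :
    IsQuasinilpotent (c • a) := by
  intro x hx
  rcases eq_or_ne c 0 with rfl | hc
  · simp
  have hax : Commute a x := by simpa [smul_smul, hc] using hx.smul_left c⁻¹
  simpa only [smul_mul_assoc, mul_smul_comm] using h _ (hax.smul_right c)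

lemma IsQuasinilpotent.spectrum_subset {a : R} (h : IsQuasinilpotent a) :
    spectrum 𝕜 a ⊆ {0} := by
  intro z hz
  by_contra hz0
  refine spectrum.mem_iff.1 hz ?_
  have key : algebraMap 𝕜 R z * (1 + a * algebraMap 𝕜 R (-z⁻¹)) = algebraMap 𝕜 R z - a := by
    rw [← Algebra.commutes, mul_add, mul_one, ← mul_assoc, ← map_mul, mul_neg,
      mul_inv_cancel₀ hz0, map_neg, map_one, neg_one_mul, sub_eq_add_neg]
  rw [← key]
  exact ((isUnit_iff_ne_zero.2 hz0).map _).mul (h _ (Algebra.commutes _ a).symm)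

/-- With `u c = z - c • p`, moving `q` across `(u c)⁻¹` only rescales `c` by `λ⁻¹`; this makes
`(u 1)⁻¹ q` nilpotent, and `z - (p + q) = u 1 * (1 - (u 1)⁻¹ q)`. -/
theorem spectrum_add_subset_zero_of_mul_eq_smul_mul {p q : R} (hlam : lam ≠ 0)
    (hp : IsQuasinilpotent p) (hq : IsNilpotent q) (hpq : p * q = lam • (q * p)) :
    spectrum 𝕜 (p + q) ⊆ {0} := by
  intro z hz
  by_contra hz0
  refine spectrum.mem_iff.1 hz ?_
  set u : 𝕜 → R := fun c => algebraMap 𝕜 R z - c • p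
  have hu (c : 𝕜) : IsUnit (u c) :=
    not_not.1 fun h => hz0 ((hp.smul c).spectrum_subset h)
  have hqp : q * p = lam⁻¹ • (p * q) := by rw [hpq, smul_smul, inv_mul_cancel₀ hlam, one_smul]
  have hswap (c : 𝕜) : q * Ring.inverse (u c) = Ring.inverse (u (lam⁻¹ * c)) * q := by
    refine SemiconjBy.ring_inverse ?_ (hu c) (hu _)
    simp only [SemiconjBy, u, mul_sub, sub_mul, Algebra.commutes, mul_smul_comm, hqp,
      smul_mul_assoc, smul_smul, mul_comm c]
  have hswap_pow (n : ℕ) (c : 𝕜) :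
      q ^ n * Ring.inverse (u c) = Ring.inverse (u (lam⁻¹ ^ n * c)) * q ^ n := by
    induction n generalizing c with
    | zero => simp
    | succ n ih => rw [pow_succ, mul_assoc, hswap, ← mul_assoc, ih, mul_assoc, pow_succ,
        mul_assoc]
  have key : algebraMap 𝕜 R z - (p + q) = u 1 * (1 - Ring.inverse (u 1) * q) := by
    rw [mul_sub, mul_one, ← mul_assoc, Ring.mul_inverse_cancel _ (hu 1)]
    simp only [u, one_smul, one_mul, sub_sub]
  rw [key]
  exact (hu 1).mul
    (hq.mul_left_of_forall_pow_mul fun n => ⟨_, hswap_pow n 1⟩).isUnit_one_sub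

lemma Matrix.spectrum_diagonal_subset {n : Type*} [Fintype n] [DecidableEq n] (v : n → R) :
    spectrum 𝕜 (Matrix.diagonal v) ⊆ ⋃ i, spectrum 𝕜 (v i) := by
  intro z hz
  by_contra h
  simp only [Set.mem_iUnion, spectrum.mem_iff, not_exists, not_not] at h
  refine spectrum.mem_iff.1 hz ?_
  have : algebraMap 𝕜 (Matrix n n R) z - Matrix.diagonal v =
      Matrix.diagonalRingHom n R (fun i => algebraMap 𝕜 R z - v i) := by
    rw [Matrix.algebraMap_eq_diagonal, Matrix.diagonalRingHom_apply, Matrix.diagonal_sub]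
    rfl
  rw [this]
  exact (Pi.isUnit_iff.2 h).map _

lemma IsGDrazinInverse.mul_mul_eq_zero (hP : IsGDrazinInverse P Pd)
    (hPQ : P * Q = lam • ((1 - P * Pd) * Q * P)) : P * Pd * Q = 0 := by
  rw [hP.1.eq, mul_assoc, hPQ, mul_smul_comm, ← mul_assoc, ← mul_assoc, mul_sub, mul_one,
    hP.mul_mul_self, sub_self, zero_mul, zero_mul, smul_zero]

lemma IsGDrazinInverse.spectrum_add_mul_one_sub_subset (hP : IsGDrazinInverse P Pd)
    (hlam : lam ≠ 0) (hQ : IsNilpotent Q) (hPQ : P * Q = lam • ((1 - P * Pd) * Q * P)) :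
    spectrum 𝕜 ((P + Q) * (1 - P * Pd)) ⊆ {0} := by
  set f := 1 - P * Pd
  have hfQ : f * Q = Q := by rw [sub_mul, one_mul, hP.mul_mul_eq_zero hPQ, sub_zero]
  have hfP : f * P = P * f := ((Commute.one_right P).sub_right hP.commute_mul).eq.symm
  have hfPf : f * (P * f) = P * f := by
    rw [← mul_assoc, hfP, mul_assoc, hP.isIdempotentElem.one_sub.eq]
  rw [add_mul]
  refine spectrum_add_subset_zero_of_mul_eq_smul_mul hlam ?_ ?_ ?_
  · rw [mul_sub, mul_one, ← mul_assoc, ← sq]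
    exact hP.2.2
  · exact (hfQ.symm ▸ hQ : IsNilpotent (f * Q)).mul_comm
  · calc P * f * (Q * f) = P * Q * f := by rw [← mul_assoc, mul_assoc P, hfQ]
      _ = lam • (Q * P * f) := by rw [hPQ, hfQ, smul_mul_assoc]
      _ = lam • (Q * f * (P * f)) := by rw [mul_assoc Q f, hfPf, mul_assoc]

end Algebraic

section Normed

variable {A : Type*} [NormedRing A]

def IsNormQuasinilpotent (a : A) : Prop :=
  ∀ ε : ℝ, 0 < ε → ∀ᶠ n in atTop, ‖a ^ n‖ ≤ ε ^ n

lemma IsNormQuasinilpotent.mul_of_commute {a x : A} (ha : IsNormQuasinilpotent a)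
    (hax : Commute a x) : IsNormQuasinilpotent (a * x) := by
  intro ε hε
  filter_upwards [ha (ε / (‖x‖ + 1)) (by positivity), eventually_ge_atTop 1] with n hn hn1
  have hx : ‖x‖ / (‖x‖ + 1) ≤ 1 := div_le_one_of_le₀ (by linarith) (by positivity)
  calc ‖(a * x) ^ n‖ ≤ ‖a ^ n‖ * ‖x‖ ^ n := by
        rw [hax.mul_pow]
        exact (norm_mul_le _ _).trans (by gcongr; exact norm_pow_le' x hn1)
    _ ≤ (ε / (‖x‖ + 1)) ^ n * ‖x‖ ^ n := by gcongr
    _ = ε ^ n * (‖x‖ / (‖x‖ + 1)) ^ n := by ring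
    _ ≤ ε ^ n := mul_le_of_le_one_right (by positivity) (pow_le_one₀ (by positivity) hx)

lemma IsNormQuasinilpotent.of_mul_self_eq_mul {W N : A} (hW : IsNormQuasinilpotent W)
    (hN : N * N = W * N) : IsNormQuasinilpotent N := by
  have hpow (k : ℕ) : N ^ (k + 1) = W ^ k * N := by
    induction k with
    | zero => simp
    | succ k ih => rw [pow_succ, ih, mul_assoc, hN, ← mul_assoc, ← pow_succ]
  intro ε hε
  have hlarge : ∀ᶠ k : ℕ in atTop, ‖N‖ / ε ≤ 2 ^ k :=
    (tendsto_pow_atTop_atTop_of_one_lt one_lt_two).eventually_ge_atTop _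
  filter_upwards [(tendsto_sub_atTop_nat 1).eventually ((hW (ε / 2) (by positivity)).and hlarge),
    eventually_ge_atTop 1] with n ⟨hWn, hNn⟩ hn1
  obtain ⟨k, rfl⟩ : ∃ k, n = k + 1 := ⟨n - 1, by omega⟩
  rw [Nat.add_sub_cancel, div_le_iff₀ hε] at *
  calc ‖N ^ (k + 1)‖ ≤ ‖W ^ k‖ * ‖N‖ := hpow k ▸ norm_mul_le _ _
    _ ≤ (ε / 2) ^ k * (2 ^ k * ε) := by gcongr
    _ = ε ^ (k + 1) := by rw [div_pow, pow_succ]; field_simp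

lemma IsNormQuasinilpotent.summable_pow_mul_mul_pow {W : A} [CompleteSpace A]
    (hW : IsNormQuasinilpotent W) (a b : A) : Summable fun n => W ^ n * a * b ^ n := by
  set ε := (2 * (‖b‖ + 1))⁻¹
  have hεb : ε * ‖b‖ ≤ 1 / 2 := by
    rw [inv_mul_le_iff₀ (by positivity)]
    linarith
  refine Summable.of_norm_bounded_eventually_nat (summable_geometric_two.mul_left ‖a‖) ?_
  filter_upwards [hW ε (by positivity), eventually_ge_atTop 1] with n hn hn1
  calc ‖W ^ n * a * b ^ n‖ ≤ ‖W ^ n‖ * ‖a‖ * ‖b‖ ^ n :=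
        norm_mul₃_le.trans (by gcongr; exact norm_pow_le' b hn1)
    _ ≤ ε ^ n * ‖a‖ * ‖b‖ ^ n := by gcongr
    _ = ‖a‖ * (ε * ‖b‖) ^ n := by ring
    _ ≤ ‖a‖ * (1 / 2) ^ n := by gcongr

lemma IsNormQuasinilpotent.isUnit_one_sub {a : A} [CompleteSpace A]
    (ha : IsNormQuasinilpotent a) : IsUnit (1 - a) := by
  obtain ⟨n, hn, hn1⟩ := ((ha (1 / 2) (by norm_num)).and (eventually_ge_atTop 1)).exists
  have hsmall : ‖a ^ n‖ < 1 :=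
    hn.trans_lt (pow_lt_one₀ (by norm_num) (by norm_num) (by omega))
  have hcomm : Commute (1 - a) (∑ i ∈ Finset.range n, a ^ i) :=
    (mul_neg_geom_sum a n).trans (geom_sum_mul_neg a n).symm
  have hunit := (Units.oneSub _ hsmall).isUnit
  rw [Units.val_oneSub, ← mul_neg_geom_sum, hcomm.isUnit_mul_iff] at hunit
  exact hunit.1

lemma IsNormQuasinilpotent.isQuasinilpotent {a : A} [CompleteSpace A]
    (ha : IsNormQuasinilpotent a) : IsQuasinilpotent a := by
  intro x hx
  simpa [sub_eq_add_neg] using (ha.mul_of_commute hx.neg_right).isUnit_one_sub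

variable [NormedAlgebra ℂ A] [CompleteSpace A]

lemma isNormQuasinilpotent_of_spectrum_subset {a : A} (h : spectrum ℂ a ⊆ {0}) :
    IsNormQuasinilpotent a := by
  have hrad : spectralRadius ℂ a = 0 :=
    le_antisymm (iSup₂_le fun k hk => by simp [Set.mem_singleton_iff.1 (h hk)]) zero_le
  have hlim := spectrum.pow_norm_pow_one_div_tendsto_nhds_spectralRadius a
  rw [hrad] at hlim
  intro ε hε
  filter_upwards [hlim.eventually (gt_mem_nhds (ENNReal.ofReal_pos.2 hε)),
    eventually_ge_atTop 1] with n hn hn1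
  rw [ENNReal.ofReal_lt_ofReal_iff hε] at hn
  calc ‖a ^ n‖ = (‖a ^ n‖ ^ (1 / n : ℝ)) ^ n := by
        rw [one_div, Real.rpow_inv_natCast_pow (norm_nonneg _) (by omega)]
    _ ≤ ε ^ n := by gcongr

lemma isQuasinilpotent_iff_spectrum_subset {a : A} : IsQuasinilpotent a ↔ spectrum ℂ a ⊆ {0} :=
  ⟨IsQuasinilpotent.spectrum_subset,
    fun h => (isNormQuasinilpotent_of_spectrum_subset h).isQuasinilpotent⟩

end Normed

section BanachAlgebra

variable {R : Type*} [NormedRing R] [CompleteSpace R] {P Pd Q S : R}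

theorem IsGDrazinInverse.add_add_of_relations (hP : IsGDrazinInverse P Pd)
    (heQ : P * Pd * Q = 0) (hSe : S * (P * Pd) = S) (heS : P * Pd * S = 0)
    (hMS : (P + Q) * S = S * P - Q * Pd)
    (hW : IsNormQuasinilpotent ((P + Q) * (1 - P * Pd))) :
    IsGDrazinInverse (P + Q) (Pd + S) := by
  have hee : P * Pd * (P * Pd) = P * Pd := hP.isIdempotentElem
  have hef : P * Pd * (1 - P * Pd) = 0 := hP.isIdempotentElem.mul_one_sub_self
  have hPe : P * (P * Pd) = P * Pd * P := hP.commute_mul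
  have hdQ : Pd * Q = 0 := by rw [← hP.mul_mul_self, mul_assoc, heQ, mul_zero]
  have hSQ : S * Q = 0 := by rw [← hSe, mul_assoc, heQ, mul_zero]
  have hXS : (Pd + S) * S = 0 := by
    calc (Pd + S) * S = (Pd + S) * (P * Pd) * S := by
          rw [add_mul Pd S (P * Pd), hP.mul_mul_self, hSe]
      _ = 0 := by rw [mul_assoc, heS, mul_zero]
  have hMX : (P + Q) * (Pd + S) = P * Pd + S * P := by rw [mul_add, hMS, add_mul]; abel
  have hXM : (Pd + S) * (P + Q) = P * Pd + S * P := by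
    rw [add_mul, mul_add, mul_add, hdQ, hSQ, ← hP.1.eq]; abel
  refine ⟨hMX.trans hXM.symm, ?_, ?_⟩
  · rw [mul_assoc, hMX, mul_add, ← mul_assoc (Pd + S) S, hXS, zero_mul, add_zero, add_mul,
      hP.mul_mul_self, hSe]
  have heM : P * Pd * (P + Q) = P * (P * Pd) := by rw [mul_add, heQ, add_zero, hPe]
  have hN : P + Q - (P + Q) ^ 2 * (Pd + S) = P + Q - (P + Q) * (P * Pd + S * P) := by
    rw [sq, mul_assoc, hMX]
  generalize P + Q - (P + Q) ^ 2 * (Pd + S) = N at hN ⊢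
  have heN : P * Pd * N = 0 := by
    rw [hN, mul_sub, ← mul_assoc (P * Pd) (P + Q), heM, mul_add, mul_assoc P (P * Pd), hee,
      ← mul_assoc (P * (P * Pd)) S, mul_assoc P (P * Pd) S, heS, mul_zero, zero_mul, add_zero,
      sub_self]
  have hNf : N * (1 - P * Pd) = (P + Q) * (1 - P * Pd) := by
    have hSPf : S * P * (1 - P * Pd) = 0 := by
      rw [← hSe, mul_assoc S, ← hPe, ← mul_assoc, mul_assoc, hef, mul_zero]
    rw [hN, sub_mul, mul_assoc (P + Q), add_mul (P * Pd), hef, hSPf, add_zero, mul_zero,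
      sub_zero]
  have hNN : N * N = (P + Q) * (1 - P * Pd) * N := by
    rw [← hNf, mul_assoc, sub_mul, one_mul, heN, sub_zero]
  exact (hW.of_mul_self_eq_mul hNN).isQuasinilpotent

end BanachAlgebra

section ComplexBanachAlgebra

variable {R : Type*} [NormedRing R] [NormedAlgebra ℂ R] [CompleteSpace R] {P Pd Q : R} {lam : ℂ}

theorem IsGDrazinInverse.add (hP : IsGDrazinInverse P Pd) (hlam : lam ≠ 0) (hQ : IsNilpotent Q)
    (hPQ : P * Q = lam • ((1 - P * Pd) * Q * P)) :
    IsGDrazinInverse (P + Q) (Pd + ∑' n : ℕ, (P + Q) ^ n * (Q * Pd ^ (n + 2))) := by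
  have heQ := hP.mul_mul_eq_zero hPQ
  have hW : IsNormQuasinilpotent ((P + Q) * (1 - P * Pd)) :=
    isNormQuasinilpotent_of_spectrum_subset (hP.spectrum_add_mul_one_sub_subset hlam hQ hPQ)
  have heM : SemiconjBy (P * Pd) (P + Q) P := by
    rw [SemiconjBy, mul_add, heQ, add_zero, hP.commute_mul.eq]
  have hMQ (n : ℕ) : (P + Q) ^ n * Q = ((P + Q) * (1 - P * Pd)) ^ n * Q := by
    have hfQ : (1 - P * Pd) * Q = Q := by rw [sub_mul, one_mul, heQ, sub_zero]
    have hfMf : (1 - P * Pd) * (P + Q) * (1 - P * Pd) = (P + Q) * (1 - P * Pd) := by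
      rw [sub_mul, one_mul, heM.eq, sub_mul, mul_assoc P, hP.isIdempotentElem.mul_one_sub_self,
        mul_zero, sub_zero]
    calc (P + Q) ^ n * Q = (P + Q) ^ n * (1 - P * Pd) * Q := by rw [mul_assoc, hfQ]
      _ = _ := by rw [pow_mul_eq_mul_pow_mul hP.isIdempotentElem.one_sub hfMf, mul_assoc, hfQ]
  have hsum : Summable fun n => (P + Q) ^ n * (Q * Pd ^ (n + 2)) :=
    ((hW.summable_pow_mul_mul_pow Q Pd).mul_right (Pd ^ 2)).congr fun n => by
      simp only [pow_add, ← mul_assoc, hMQ]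
  have hTP (n : ℕ) :
      (P + Q) ^ n * (Q * Pd ^ (n + 2)) * P = (P + Q) ^ n * (Q * Pd ^ (n + 1)) := by
    rw [mul_assoc, mul_assoc, hP.pow_add_two_mul]
  refine hP.add_add_of_relations heQ ?_ ?_ ?_ hW
  · rw [← hsum.tsum_mul_right]
    exact tsum_congr fun n => by rw [mul_assoc, mul_assoc, hP.pow_succ_mul_mul (n + 1)]
  · rw [← hsum.tsum_mul_left]
    refine (tsum_congr fun n => ?_).trans tsum_zero
    rw [← mul_assoc, (heM.pow_right n).eq, mul_assoc, ← mul_assoc _ Q, heQ, zero_mul, mul_zero]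
  · rw [← hsum.tsum_mul_left, ← hsum.tsum_mul_right, tsum_congr hTP,
      ((hsum.mul_right P).congr hTP).tsum_eq_zero_add]
    simp [← mul_assoc, ← pow_succ']

end ComplexBanachAlgebra

section Matrix

variable {n A : Type*} [Fintype n] [DecidableEq n] [NormedRing A] [NormedAlgebra ℂ A]
  [CompleteSpace A]

lemma Matrix.isQuasinilpotent_diagonal {v : n → A} (hv : ∀ i, IsQuasinilpotent (v i)) :
    IsQuasinilpotent (Matrix.diagonal v) := by
  let := Matrix.linftyOpNormedRing (n := n) (α := A)
  let := Matrix.linftyOpNormedAlgebra (R := ℂ) (n := n) (α := A)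
  -- the `L∞`-operator norm induces the product uniformity, for which completeness is known
  have : @CompleteSpace (Matrix n n A) PseudoMetricSpace.toUniformSpace :=
    (inferInstance : CompleteSpace (n → n → A))
  exact isQuasinilpotent_iff_spectrum_subset.2 <| (Matrix.spectrum_diagonal_subset v).trans
    (Set.iUnion_subset fun i => isQuasinilpotent_iff_spectrum_subset.1 (hv i))

lemma IsGDrazinInverse.matrix_diagonal {v w : n → A} (h : ∀ i, IsGDrazinInverse (v i) (w i)) :
    IsGDrazinInverse (Matrix.diagonal v) (Matrix.diagonal w) := by
  refine ⟨?_, ?_, ?_⟩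
  · simp only [Commute, SemiconjBy, Matrix.diagonal_mul_diagonal, fun i => (h i).1.eq]
  · simp only [Matrix.diagonal_mul_diagonal, fun i => (h i).2.1]
  · simp only [sq, Matrix.diagonal_mul_diagonal, Matrix.diagonal_sub]
    exact Matrix.isQuasinilpotent_diagonal fun i => by simpa only [sq] using (h i).2.2

end Matrix

variable {𝔸 : Type*} [NormedRing 𝔸] [NormedAlgebra ℂ 𝔸] [CompleteSpace 𝔸]

/-- if `AB = λ Aᵖ B D`, `DC = λ Dᵖ C A` and `BC = 0`, then
`Mᵈ = diag(Ad, Dd) + Σ_{n≥0} Mⁿ [[0, B Dd^(n+2)],[C Ad^(n+2), 0]]`. -/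
theorem block_gDrazin_formula'' (A B C D Ad Dd : 𝔸) (lam : ℂ) (hlam : lam ≠ 0)
    (hA : IsGDrazinInverse A Ad) (hD : IsGDrazinInverse D Dd)
    (h1 : A * B = lam • ((1 - A * Ad) * B * D))
    (h2 : D * C = lam • ((1 - D * Dd) * C * A))
    (h3 : B * C = 0) :
    IsGDrazinInverse (!![A, B; C, D])
      (!![Ad, 0; 0, Dd] +
        ∑' n : ℕ, (!![A, B; C, D] : Matrix (Fin 2) (Fin 2) 𝔸) ^ n *
          !![0, B * Dd ^ (n + 2); C * Ad ^ (n + 2), 0]) := by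
  let := Matrix.linftyOpNormedRing (n := Fin 2) (α := 𝔸)
  let := Matrix.linftyOpNormedAlgebra (R := ℂ) (n := Fin 2) (α := 𝔸)
  have : @CompleteSpace (Matrix (Fin 2) (Fin 2) 𝔸) PseudoMetricSpace.toUniformSpace :=
    (inferInstance : CompleteSpace (Fin 2 → Fin 2 → 𝔸))
  have hP : IsGDrazinInverse !![A, 0; 0, D] !![Ad, 0; 0, Dd] := by
    simpa only [Matrix.diagonal_vec2] using
      IsGDrazinInverse.matrix_diagonal (v := ![A, D]) (w := ![Ad, Dd])
        (Fin.forall_fin_two.2 ⟨hA, hD⟩)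
  have hQ : IsNilpotent !![0, B; C, 0] := ⟨3, by
    simp [pow_succ, h3, show C * B * C = 0 by rw [mul_assoc, h3, mul_zero], ← Matrix.ext_iff]⟩
  have hPQ : !![A, 0; 0, D] * !![0, B; C, 0] =
      lam • ((1 - !![A, 0; 0, D] * !![Ad, 0; 0, Dd]) * !![0, B; C, 0] * !![A, 0; 0, D]) := by
    simp [Matrix.one_fin_two, h1, h2]
  have hM : !![A, 0; 0, D] + !![0, B; C, 0] = !![A, B; C, D] := by simp
  have hQPd (k : ℕ) :
      !![0, B; C, 0] * !![Ad, 0; 0, Dd] ^ k = !![0, B * Dd ^ k; C * Ad ^ k, 0] := by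
    rw [← Matrix.diagonal_vec2, Matrix.diagonal_pow]
    simp [Matrix.diagonal_fin_two]
  have key := hP.add hlam hQ hPQ
  simp only [hM, hQPd] at key
  exact key
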